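/- arXiv:2201.00756 — 2 statements merged into one kernel-verified Lean document; each statement's English description precedes it below -/
import Mathlib

section
/- Let H be a real inner product space, let Φ₁, …, Φ_{N_s} be elements of H, and let C be the N_s×N_s real symmetric positive semidefinite matrix with entries C_{ij} = ⟨Φᵢ, Φⱼ⟩, with eigenvalues listed in decreasing order λ₁ ≥ λ₂ ≥ … ≥ λ_{N_s} ≥ 0. Then for every N with 1 ≤ N ≤ N_s and every orthonormal family ζ₁, …, ζ_N in H, the total squared projection error satisfies Σ_{i=1}^{N_s} ‖Φᵢ − Σ_{k=1}^{N} ⟨Φᵢ, ζₖ⟩ ζₖ‖² ≥ Σ_{k=N+1}^{N_s} λₖ. -/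
open scoped RealInnerProductSpace

lemma pod_aux_err {H : Type*} [NormedAddCommGroup H] [InnerProductSpace ℝ H]
    {N : ℕ} (ζ : Fin N → H) (hζ : Orthonormal ℝ ζ) (x : H) :
    ‖x - ∑ k, ⟪x, ζ k⟫ • ζ k‖ ^ 2 = ‖x‖ ^ 2 - ∑ k, ⟪x, ζ k⟫ ^ 2 := by
  have h1 : ⟪x, ∑ k, ⟪x, ζ k⟫ • ζ k⟫ = ∑ k, ⟪x, ζ k⟫ ^ 2 := by
    rw [inner_sum]; simp [real_inner_smul_right, sq]
  have h2 : ‖(∑ k, ⟪x, ζ k⟫ • ζ k)‖ ^ 2 = ∑ k, ⟪x, ζ k⟫ ^ 2 := by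
    rw [← real_inner_self_eq_norm_sq, sum_inner]
    simp [inner_sum, real_inner_smul_left, real_inner_smul_right,
      orthonormal_iff_ite.mp hζ, mul_ite, Finset.sum_ite_eq', sq]
  rw [norm_sub_sq_real, h1, h2]; ring


/-- **Lower bound for the POD projection error.**
Let `Φ₁, …, Φ_{N_s}` be snapshots in a real inner product space `H` and let
`C` be the correlation (Gram) matrix `C i j = ⟪Φ i, Φ j⟫`, with eigenvalues
`λ₁ ≥ λ₂ ≥ … ≥ λ_{N_s} ≥ 0` (given via an orthonormal eigenbasis of `ℝ^{N_s}`
listed in decreasing order). Then for every `1 ≤ N ≤ N_s` and every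
orthonormal family `ζ₁, …, ζ_N` in `H`,
`Σ_i ‖Φ i − Σ_k ⟪Φ i, ζ k⟫ ζ k‖² ≥ Σ_{k ≥ N} λ k` (0-based indexing:
the sum of the `N_s − N` smallest eigenvalues). -/
theorem pod_projection_error_lower_bound
    {H : Type*} [NormedAddCommGroup H] [InnerProductSpace ℝ H]
    (Ns : ℕ) (Φ : Fin Ns → H)
    (C : Matrix (Fin Ns) (Fin Ns) ℝ)
    (hC : ∀ i j, C i j = ⟪Φ i, Φ j⟫)
    (lam : Fin Ns → ℝ) (q : Fin Ns → Fin Ns → ℝ)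
    (hq_orth : ∀ k l, (∑ j, q k j * q l j) = if k = l then (1 : ℝ) else 0)
    (heig : ∀ k, C.mulVec (q k) = lam k • q k)
    (hdec : ∀ k l : Fin Ns, k ≤ l → lam l ≤ lam k)
    (hnonneg : ∀ k, 0 ≤ lam k) :
    ∀ N : ℕ, 1 ≤ N → N ≤ Ns →
      ∀ ζ : Fin N → H, Orthonormal ℝ ζ →
        (∑ k ∈ Finset.univ.filter (fun k : Fin Ns => N ≤ (k : ℕ)), lam k) ≤
          ∑ i, ‖Φ i - ∑ k, ⟪Φ i, ζ k⟫ • ζ k‖ ^ 2 := by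
  intro N hN1 hNNs ζ hζ
  classical
  -- column orthonormality of q
  have hcol : ∀ i j, (∑ l, q l i * q l j) = if i = j then (1 : ℝ) else 0 := by
    have hQ : (Matrix.of q) * (Matrix.of q).transpose = 1 := by
      ext k l
      simpa [Matrix.mul_apply, Matrix.one_apply, Matrix.transpose_apply] using hq_orth k l
    have hQ' : (Matrix.of q).transpose * (Matrix.of q) = 1 := mul_eq_one_comm.mp hQ
    intro i j
    have := congrFun (congrFun hQ' i) j
    simpa [Matrix.mul_apply, Matrix.one_apply, mul_comm] using this
  set ψ : Fin Ns → H := fun l => ∑ i, q l i • Φ i with hψdef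
  -- inner products of the ψ's
  have hψ : ∀ l m, ⟪ψ l, ψ m⟫ = if l = m then lam l else 0 := by
    intro l m
    have h1 : ⟪ψ l, ψ m⟫ = ∑ j, q l j * (C.mulVec (q m)) j := by
      simp only [hψdef, sum_inner, inner_sum, real_inner_smul_left, real_inner_smul_right,
        Matrix.mulVec, dotProduct]
      rw [Finset.sum_comm]
      refine Finset.sum_congr rfl fun j _ => ?_
      rw [Finset.mul_sum]
      refine Finset.sum_congr rfl fun i _ => ?_
      rw [hC]; ring
    rw [h1, heig m]
    have : ∑ i, q l i * (lam m • q m) i = lam m * ∑ i, q l i * q m i := by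
      rw [Finset.mul_sum]
      refine Finset.sum_congr rfl fun i _ => ?_
      simp [Pi.smul_apply, smul_eq_mul]; ring
    rw [this, hq_orth l m]
    by_cases h : l = m <;> simp [h]
  -- Φ i in terms of ψ
  have hPhi : ∀ i, Φ i = ∑ l, q l i • ψ l := by
    intro i
    have : ∑ l, q l i • ψ l = ∑ j, (∑ l, q l i * q l j) • Φ j := by
      simp only [hψdef, Finset.smul_sum, smul_smul]
      rw [Finset.sum_comm]
      refine Finset.sum_congr rfl fun j _ => ?_
      rw [Finset.sum_smul]
    rw [this]
    simp [hcol, ite_smul, Finset.sum_ite_eq']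
  set c : Fin Ns → Fin N → ℝ := fun l k => ⟪ψ l, ζ k⟫ with hcdef
  have hinner : ∀ i k, ⟪Φ i, ζ k⟫ = ∑ l, q l i * c l k := by
    intro i k
    conv_lhs => rw [hPhi i]
    simp [sum_inner, real_inner_smul_left, hcdef]
  -- total norm of snapshots
  have hnormsum : ∑ i, ‖Φ i‖ ^ 2 = ∑ l, lam l := by
    have h1 : ∀ i, ‖Φ i‖ ^ 2 = ∑ l, q l i ^ 2 * lam l := by
      intro i
      rw [← real_inner_self_eq_norm_sq]
      conv_lhs => rw [hPhi i]
      simp only [sum_inner, inner_sum, real_inner_smul_left, real_inner_smul_right, hψ]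
      simp [mul_ite, Finset.sum_ite_eq', sq]
      ring_nf
    rw [Finset.sum_congr rfl fun i _ => h1 i, Finset.sum_comm]
    refine Finset.sum_congr rfl fun l _ => ?_
    have : ∑ i, q l i ^ 2 * lam l = (∑ i, q l i * q l i) * lam l := by
      rw [Finset.sum_mul]; exact Finset.sum_congr rfl fun i _ => by ring
    rw [this, hq_orth l l]; simp
  set t : Fin Ns → ℝ := fun l => ∑ k, c l k ^ 2 with htdef
  -- the projected energy equals ∑ t
  have hS : ∑ i, ∑ k, ⟪Φ i, ζ k⟫ ^ 2 = ∑ l, t l := by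
    have h1 : ∀ i k, ⟪Φ i, ζ k⟫ ^ 2 = ∑ l, ∑ m, (q l i * q m i) * (c l k * c m k) := by
      intro i k
      rw [hinner, sq, Finset.sum_mul_sum]
      exact Finset.sum_congr rfl fun l _ => Finset.sum_congr rfl fun m _ => by ring
    calc ∑ i, ∑ k, ⟪Φ i, ζ k⟫ ^ 2
        = ∑ k, ∑ l, ∑ m, (∑ i, q l i * q m i) * (c l k * c m k) := by
          simp only [h1]
          rw [Finset.sum_comm]
          refine Finset.sum_congr rfl fun k _ => ?_
          rw [Finset.sum_comm]
          refine Finset.sum_congr rfl fun l _ => ?_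
          rw [Finset.sum_comm]
          refine Finset.sum_congr rfl fun m _ => ?_
          rw [Finset.sum_mul]
      _ = ∑ l, t l := by
          simp only [hq_orth, ite_mul, one_mul, zero_mul]
          simp [Finset.sum_ite_eq', htdef, sq]
          rw [Finset.sum_comm]
  -- Bessel: t l ≤ lam l
  have hlam_psi : ∀ l, ‖ψ l‖ ^ 2 = lam l := by
    intro l
    rw [← real_inner_self_eq_norm_sq, hψ l l]
    simp
  have ht_le : ∀ l, t l ≤ lam l := by
    intro l
    have hb := hζ.sum_inner_products_le (s := Finset.univ) (ψ l)
    have he : ∑ k, ‖⟪ζ k, ψ l⟫‖ ^ 2 = t l := by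
      simp [htdef, hcdef, real_inner_comm, Real.norm_eq_abs, sq_abs]
    rw [he, hlam_psi l] at hb
    exact hb
  have ht_nonneg : ∀ l, 0 ≤ t l := fun l => Finset.sum_nonneg fun k _ => sq_nonneg _
  have hψzero : ∀ l, lam l = 0 → ψ l = 0 := by
    intro l h
    have : ⟪ψ l, ψ l⟫ = 0 := by rw [hψ l l]; simp [h]
    exact inner_self_eq_zero.mp this
  set s' : Fin Ns → ℝ := fun l => if lam l = 0 then 0 else t l / lam l with hs'def
  have hts : ∀ l, t l = lam l * s' l := by
    intro l
    by_cases h : lam l = 0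
    · simp only [hs'def, if_pos h, h, zero_mul, mul_zero]
      have : ∀ k, c l k = 0 := by
        intro k; simp [hcdef, hψzero l h]
      simp [htdef, this]
    · simp only [hs'def, if_neg h]
      field_simp
  have hs0 : ∀ l, 0 ≤ s' l := by
    intro l
    by_cases h : lam l = 0
    · simp [hs'def, h]
    · simp only [hs'def, if_neg h]
      exact div_nonneg (ht_nonneg l) (hnonneg l)
  have hs1 : ∀ l, s' l ≤ 1 := by
    intro l
    by_cases h : lam l = 0
    · simp [hs'def, h]
    · simp only [hs'def, if_neg h]
      exact div_le_one_of_le₀ (ht_le l) (hnonneg l)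
  -- sum of s' is at most N
  have hsum_s : ∑ l, s' l ≤ (N : ℝ) := by
    have hstep : ∑ l, s' l = ∑ l : {l : Fin Ns // lam l ≠ 0}, t l.1 / lam l.1 := by
      have h1 : ∑ l, s' l = ∑ l ∈ Finset.univ.filter (fun l => lam l ≠ 0), t l / lam l := by
        rw [Finset.sum_filter]
        refine Finset.sum_congr rfl fun l _ => ?_
        by_cases h : lam l = 0 <;> simp [hs'def, h]
      rw [h1]
      exact (Finset.sum_subtype (p := fun l => lam l ≠ 0)
        (Finset.univ.filter (fun l => lam l ≠ 0)) (fun x => by simp) (fun l => t l / lam l))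
    rw [hstep]
    set e : {l : Fin Ns // lam l ≠ 0} → H := fun l => (Real.sqrt (lam l.1))⁻¹ • ψ l.1 with hedef
    have hlpos : ∀ l : {l : Fin Ns // lam l ≠ 0}, 0 < lam l.1 := fun l =>
      lt_of_le_of_ne (hnonneg l.1) (Ne.symm l.2)
    have he_on : Orthonormal ℝ e := by
      rw [orthonormal_iff_ite]
      intro l m
      simp only [hedef, real_inner_smul_left, real_inner_smul_right, hψ]
      by_cases h : l = m
      · subst h
        simp only [if_pos rfl]
        have h1 : Real.sqrt (lam l.1) * Real.sqrt (lam l.1) = lam l.1 :=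
          Real.mul_self_sqrt (hnonneg l.1)
        have hsq : Real.sqrt (lam l.1) ≠ 0 :=
          ne_of_gt (Real.sqrt_pos.mpr (hlpos l))
        field_simp
        simp [Real.sq_sqrt (hnonneg l.1)]
      · have h' : l.1 ≠ m.1 := fun hh => h (Subtype.ext hh)
        simp [h, h']
    have hb : ∀ k, ∑ l : {l : Fin Ns // lam l ≠ 0}, (c l.1 k) ^ 2 / lam l.1 ≤ 1 := by
      intro k
      have := he_on.sum_inner_products_le (s := Finset.univ) (ζ k)
      rw [hζ.1 k] at this
      simp only [one_pow] at this
      refine le_trans (le_of_eq ?_) this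
      refine Finset.sum_congr rfl fun l _ => ?_
      simp only [hedef, real_inner_smul_left, Real.norm_eq_abs, sq_abs, ← hcdef]
      rw [mul_pow, ← Real.sqrt_inv, Real.sq_sqrt (inv_nonneg.mpr (hnonneg l.1))]
      rw [div_eq_inv_mul]
    calc ∑ l : {l : Fin Ns // lam l ≠ 0}, t l.1 / lam l.1
        = ∑ k : Fin N, ∑ l : {l : Fin Ns // lam l ≠ 0}, (c l.1 k) ^ 2 / lam l.1 := by
          rw [Finset.sum_comm]
          refine Finset.sum_congr rfl fun l _ => ?_
          rw [htdef, Finset.sum_div]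
      _ ≤ ∑ k : Fin N, (1 : ℝ) := Finset.sum_le_sum fun k _ => hb k
      _ = (N : ℝ) := by simp
  -- error expansion
  have herr : ∑ i, ‖Φ i - ∑ k, ⟪Φ i, ζ k⟫ • ζ k‖ ^ 2
      = ∑ l, lam l - ∑ l, lam l * s' l := by
    have h1 : ∀ i, ‖Φ i - ∑ k, ⟪Φ i, ζ k⟫ • ζ k‖ ^ 2 = ‖Φ i‖ ^ 2 - ∑ k, ⟪Φ i, ζ k⟫ ^ 2 :=
      fun i => pod_aux_err ζ hζ (Φ i)
    rw [Finset.sum_congr rfl fun i _ => h1 i, Finset.sum_sub_distrib, hnormsum, hS]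
    congr 1
    exact Finset.sum_congr rfl fun l _ => hts l
  rw [herr]
  -- final rearrangement
  set A := Finset.univ.filter (fun k : Fin Ns => N ≤ (k : ℕ)) with hA
  set B := Finset.univ.filter (fun k : Fin Ns => ¬ N ≤ (k : ℕ)) with hB
  have hAB : ∀ f : Fin Ns → ℝ, ∑ l ∈ A, f l + ∑ l ∈ B, f l = ∑ l, f l := fun f =>
    Finset.sum_filter_add_sum_filter_not _ _ f
  have hm : N - 1 < Ns := lt_of_lt_of_le (Nat.pred_lt (Nat.one_le_iff_ne_zero.mp hN1)) hNNs
  set m : Fin Ns := ⟨N - 1, hm⟩ with hmdef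
  have hcardB : B.card = N := by
    have : B = Finset.map (Fin.castLEEmb hNNs) Finset.univ := by
      ext x
      simp only [hB, Finset.mem_filter, Finset.mem_univ, true_and, Finset.mem_map, not_le]
      constructor
      · intro hx
        exact ⟨⟨x.1, hx⟩, by ext; simp [Fin.castLEEmb]⟩
      · rintro ⟨y, rfl⟩
        simpa [Fin.castLEEmb] using y.2
    rw [this, Finset.card_map, Finset.card_univ, Fintype.card_fin]
  have hm_le : ∀ l ∈ A, lam l ≤ lam m := by
    intro l hl
    refine hdec m l ?_
    simp only [hA, Finset.mem_filter] at hl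
    exact Fin.le_def.mpr (le_trans (Nat.pred_le _) hl.2)
  have hl_le : ∀ l ∈ B, lam m ≤ lam l := by
    intro l hl
    refine hdec l m ?_
    simp only [hB, Finset.mem_filter, not_le] at hl
    exact Fin.le_def.mpr (Nat.le_pred_of_lt hl.2)
  have step1 : ∑ l ∈ A, lam l * s' l ≤ lam m * ∑ l ∈ A, s' l := by
    rw [Finset.mul_sum]
    exact Finset.sum_le_sum fun l hl => mul_le_mul_of_nonneg_right (hm_le l hl) (hs0 l)
  have step2 : lam m * ∑ l ∈ B, (1 - s' l) ≤ ∑ l ∈ B, lam l * (1 - s' l) := by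
    rw [Finset.mul_sum]
    exact Finset.sum_le_sum fun l hl =>
      mul_le_mul_of_nonneg_right (hl_le l hl) (by linarith [hs1 l])
  have hBdecomp : ∑ l ∈ B, lam l = ∑ l ∈ B, lam l * s' l + ∑ l ∈ B, lam l * (1 - s' l) := by
    rw [← Finset.sum_add_distrib]
    exact Finset.sum_congr rfl fun l _ => by ring
  have hBsum : ∑ l ∈ B, (1 - s' l) = (N : ℝ) - ∑ l ∈ B, s' l := by
    rw [Finset.sum_sub_distrib, Finset.sum_const, hcardB]
    simp
  have e2 : lam m * ∑ l ∈ B, (1 - s' l) = lam m * (N : ℝ) - lam m * ∑ l ∈ B, s' l := by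
    rw [hBsum, mul_sub]
  have e3 : lam m * ∑ l, s' l = lam m * ∑ l ∈ A, s' l + lam m * ∑ l ∈ B, s' l := by
    rw [← hAB s']; ring
  have h0' : 0 ≤ lam m * (N : ℝ) - lam m * ∑ l, s' l := by
    have := mul_nonneg (hnonneg m) (sub_nonneg.mpr hsum_s)
    rwa [mul_sub] at this
  have hsplit : ∑ l, lam l * s' l = ∑ l ∈ A, lam l * s' l + ∑ l ∈ B, lam l * s' l :=
    (hAB _).symm
  have htot : ∑ l ∈ A, lam l + ∑ l ∈ B, lam l = ∑ l, lam l := hAB lam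
  linarith [step1, step2, e2, e3, h0', hsplit, htot, hBdecomp]
end

section
/- Let H be a real inner product space, let Φ₁, …, Φ_{N_s} be elements of H, and let C be the N_s×N_s correlation matrix with C_{ij} = ⟨Φᵢ, Φⱼ⟩, with eigenvalues λ₁ ≥ … ≥ λ_{N_s} ≥ 0 and a corresponding orthonormal basis of eigenvectors q¹, …, q^{N_s} of ℝ^{N_s}. Fix N ≤ N_s and suppose λ_N > 0. Define the POD modes ζₖ = λₖ^{-1/2} Σ_{j=1}^{N_s} (qᵏ)_j Φ_j for k = 1, …, N. Then ζ₁, …, ζ_N is an orthonormal family in H and it attains the minimal total squared projection error: Σ_{i=1}^{N_s} ‖Φᵢ − Σ_{k=1}^{N} ⟨Φᵢ, ζₖ⟩ ζₖ‖² = Σ_{k=N+1}^{N_s} λₖ. Hence the minimization problem defining the POD basis is solved by the eigenvalue problem for the correlation matrix. -/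
open scoped RealInnerProductSpace

lemma pod_aux_filter_eq (Ns N : ℕ) (hN : N ≤ Ns) :
    Finset.univ.filter (fun k : Fin Ns => (k : ℕ) < N)
      = Finset.univ.map ⟨Fin.castLE hN, Fin.castLE_injective hN⟩ := by
  ext k
  simp only [Finset.mem_filter, Finset.mem_map, Finset.mem_univ, true_and,
    Function.Embedding.coeFn_mk]
  constructor
  · intro hk; exact ⟨⟨(k : ℕ), hk⟩, by ext; rfl⟩
  · rintro ⟨a, rfl⟩; simpa using a.isLt

/-- **Optimality of the POD basis built by the method of snapshots.**
Let `Φ₁, …, Φ_{N_s}` be snapshots in a real inner product space `H`, let `C`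
be the correlation matrix `C i j = ⟪Φ i, Φ j⟫` with an orthonormal eigenbasis
`q¹, …, q^{N_s}` of `ℝ^{N_s}` and eigenvalues `λ₁ ≥ … ≥ λ_{N_s} ≥ 0`. Fix
`N ≤ N_s` with the `N`-th eigenvalue positive (equivalently, with the first
`N` eigenvalues positive), and define the POD modes
`ζ k = λ k^{-1/2} Σ_j (q k)_j Φ j` for `k = 1, …, N`. Then `ζ₁, …, ζ_N` is an
orthonormal family in `H` attaining the minimal total squared projection
error: `Σ_i ‖Φ i − Σ_k ⟪Φ i, ζ k⟫ ζ k‖² = Σ_{k ≥ N} λ k` (0-based indexing: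
the sum of the `N_s − N` smallest eigenvalues). -/
theorem pod_modes_orthonormal_and_attain_min_error
    {H : Type*} [NormedAddCommGroup H] [InnerProductSpace ℝ H]
    (Ns : ℕ) (Φ : Fin Ns → H)
    (C : Matrix (Fin Ns) (Fin Ns) ℝ)
    (hC : ∀ i j, C i j = ⟪Φ i, Φ j⟫)
    (lam : Fin Ns → ℝ) (q : Fin Ns → Fin Ns → ℝ)
    (hq_orth : ∀ k l, (∑ j, q k j * q l j) = if k = l then (1 : ℝ) else 0)
    (heig : ∀ k, C.mulVec (q k) = lam k • q k)
    (hdec : ∀ k l : Fin Ns, k ≤ l → lam l ≤ lam k)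
    (hnonneg : ∀ k, 0 ≤ lam k)
    (N : ℕ) (hN : N ≤ Ns)
    (hpos : ∀ k : Fin Ns, (k : ℕ) < N → 0 < lam k)
    (ζ : Fin N → H)
    (hζ : ∀ k : Fin N,
      ζ k = (Real.sqrt (lam (Fin.castLE hN k)))⁻¹ •
        ∑ j, q (Fin.castLE hN k) j • Φ j) :
    Orthonormal ℝ ζ ∧
      (∑ i, ‖Φ i - ∑ k, ⟪Φ i, ζ k⟫ • ζ k‖ ^ 2) =
        ∑ k ∈ Finset.univ.filter (fun k : Fin Ns => N ≤ (k : ℕ)), lam k := by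
  classical
  -- components of the eigenvector equation
  have hmul : ∀ (k i : Fin Ns), (∑ j, C i j * q k j) = lam k * q k i := by
    intro k i
    have := congrFun (heig k) i
    simpa [Matrix.mulVec, dotProduct] using this
  -- inner product of a snapshot with an unnormalized mode
  have hinner : ∀ (i k : Fin Ns), ⟪Φ i, ∑ j, q k j • Φ j⟫ = lam k * q k i := by
    intro i k
    rw [inner_sum]
    simp only [real_inner_smul_right]
    rw [← hmul k i]
    exact Finset.sum_congr rfl fun j _ => by rw [hC, mul_comm]
  -- inner product of two unnormalized modes
  have hsum : ∀ k l : Fin Ns,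
      ⟪∑ j, q k j • Φ j, ∑ j, q l j • Φ j⟫ = lam l * (if k = l then 1 else 0) := by
    intro k l
    rw [sum_inner]
    simp only [real_inner_smul_left]
    calc ∑ j, q k j * ⟪Φ j, ∑ j', q l j' • Φ j'⟫
        = ∑ j, q k j * (lam l * q l j) :=
          Finset.sum_congr rfl fun j _ => by rw [hinner]
      _ = lam l * ∑ j, q k j * q l j := by
          rw [Finset.mul_sum]; exact Finset.sum_congr rfl fun j _ => by ring
      _ = lam l * (if k = l then 1 else 0) := by rw [hq_orth]
  have hlampos : ∀ k : Fin N, 0 < lam (Fin.castLE hN k) := by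
    intro k; exact hpos _ (by simpa using k.isLt)
  have hsqrt_ne : ∀ k : Fin N, Real.sqrt (lam (Fin.castLE hN k)) ≠ 0 := fun k =>
    (Real.sqrt_pos.mpr (hlampos k)).ne'
  -- orthonormality of ζ
  have hζinner : ∀ k l : Fin N, ⟪ζ k, ζ l⟫ = if k = l then (1 : ℝ) else 0 := by
    intro k l
    rw [hζ, hζ, real_inner_smul_left, real_inner_smul_right, hsum]
    by_cases h : k = l
    · subst h
      have hl := hlampos k
      rw [if_pos rfl, if_pos rfl]
      have : lam (Fin.castLE hN k) = Real.sqrt (lam (Fin.castLE hN k)) *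
          Real.sqrt (lam (Fin.castLE hN k)) := (Real.mul_self_sqrt hl.le).symm
      rw [mul_one, this]
      field_simp
      rw [Real.sqrt_sq (Real.sqrt_nonneg _)]
    · have h' : Fin.castLE hN k ≠ Fin.castLE hN l := fun h2 =>
        h (Fin.castLE_injective hN h2)
      rw [if_neg h', if_neg h]
      ring
  have hO : Orthonormal ℝ ζ := orthonormal_iff_ite.mpr hζinner
  refine ⟨hO, ?_⟩
  -- inner product of a snapshot with a POD mode
  have hinnerζ : ∀ (i : Fin Ns) (k : Fin N),
      ⟪Φ i, ζ k⟫ = Real.sqrt (lam (Fin.castLE hN k)) * q (Fin.castLE hN k) i := by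
    intro i k
    rw [hζ, real_inner_smul_right, hinner]
    have h := Real.mul_self_sqrt (hlampos k).le
    calc (Real.sqrt (lam (Fin.castLE hN k)))⁻¹ * (lam (Fin.castLE hN k) * q (Fin.castLE hN k) i)
        = (Real.sqrt (lam (Fin.castLE hN k)))⁻¹ * (Real.sqrt (lam (Fin.castLE hN k)) *
          (Real.sqrt (lam (Fin.castLE hN k)) * q (Fin.castLE hN k) i)) := by
          rw [← mul_assoc (Real.sqrt (lam (Fin.castLE hN k))), h]
      _ = Real.sqrt (lam (Fin.castLE hN k)) * q (Fin.castLE hN k) i := by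
          rw [← mul_assoc, inv_mul_cancel₀ (hsqrt_ne k), one_mul]
  -- pointwise error formula
  have herr : ∀ i : Fin Ns,
      ‖Φ i - ∑ k, ⟪Φ i, ζ k⟫ • ζ k‖ ^ 2
        = ‖Φ i‖ ^ 2 - ∑ k : Fin N, ⟪Φ i, ζ k⟫ ^ 2 := by
    intro i
    set y := ∑ k, ⟪Φ i, ζ k⟫ • ζ k with hy
    have h1 : ⟪Φ i, y⟫ = ∑ k : Fin N, ⟪Φ i, ζ k⟫ ^ 2 := by
      rw [hy, inner_sum]
      exact Finset.sum_congr rfl fun k _ => by rw [real_inner_smul_right]; ring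
    have h2 : ‖y‖ ^ 2 = ∑ k : Fin N, ⟪Φ i, ζ k⟫ ^ 2 := by
      rw [← real_inner_self_eq_norm_sq, hy, sum_inner]
      refine Finset.sum_congr rfl fun k _ => ?_
      rw [real_inner_smul_left, inner_sum]
      simp only [real_inner_smul_right, hζinner]
      simp [Finset.mul_sum, mul_ite, Finset.sum_ite_eq', sq]
    rw [@norm_sub_sq_real, h1, h2]
    ring
  -- column orthonormality
  have hcol : ∀ i j : Fin Ns, (∑ k, q k i * q k j) = if i = j then (1 : ℝ) else 0 := by
    intro i j
    set Q : Matrix (Fin Ns) (Fin Ns) ℝ := Matrix.of q with hQ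
    have h1 : Q * Q.transpose = 1 := by
      ext k l
      simp only [Matrix.mul_apply, Matrix.transpose_apply, hQ, Matrix.of_apply,
        Matrix.one_apply]
      exact hq_orth k l
    have h2 : Q.transpose * Q = 1 := mul_eq_one_comm.mp h1
    have := congrFun (congrFun h2 i) j
    simpa [Matrix.mul_apply, Matrix.transpose_apply, hQ, Matrix.one_apply] using this
  -- trace identity: ∑ ‖Φ i‖² = ∑ lam k
  have htrace : ∑ i, ‖Φ i‖ ^ 2 = ∑ k, lam k := by
    have h1 : ∑ k, lam k = ∑ k, ∑ j, q k j * (lam k * q k j) := by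
      refine Finset.sum_congr rfl fun k _ => ?_
      have : ∑ j, q k j * (lam k * q k j) = lam k * ∑ j, q k j * q k j := by
        rw [Finset.mul_sum]; exact Finset.sum_congr rfl fun j _ => by ring
      rw [this, hq_orth, if_pos rfl, mul_one]
    have h2 : ∑ k, ∑ j, q k j * (lam k * q k j)
        = ∑ k, ∑ j, q k j * ∑ i, C j i * q k i := by
      refine Finset.sum_congr rfl fun k _ => Finset.sum_congr rfl fun j _ => by
        rw [hmul]
    have h3 : ∑ k, ∑ j, q k j * ∑ i, C j i * q k i
        = ∑ j, ∑ i, C j i * ∑ k, q k j * q k i := by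
      rw [Finset.sum_comm]
      refine Finset.sum_congr rfl fun j _ => ?_
      simp only [Finset.mul_sum]
      rw [Finset.sum_comm]
      exact Finset.sum_congr rfl fun i _ => Finset.sum_congr rfl fun k _ => by ring
    have h4 : ∑ j, ∑ i, C j i * ∑ k, q k j * q k i = ∑ j, C j j := by
      refine Finset.sum_congr rfl fun j _ => ?_
      simp only [hcol]
      simp [mul_ite, Finset.sum_ite_eq']
    have h5 : ∑ i, ‖Φ i‖ ^ 2 = ∑ j, C j j :=
      Finset.sum_congr rfl fun j _ => by rw [hC, real_inner_self_eq_norm_sq]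
    rw [h5, h1, h2, h3, h4]
  -- ∑ over i of ∑ inner² equals the partial eigenvalue sum
  have hpart : ∑ i, ∑ k : Fin N, ⟪Φ i, ζ k⟫ ^ 2
      = ∑ k : Fin N, lam (Fin.castLE hN k) := by
    rw [Finset.sum_comm]
    refine Finset.sum_congr rfl fun k _ => ?_
    have : ∀ i, ⟪Φ i, ζ k⟫ ^ 2 = lam (Fin.castLE hN k) *
        (q (Fin.castLE hN k) i * q (Fin.castLE hN k) i) := by
      intro i
      rw [hinnerζ]
      rw [mul_pow, Real.sq_sqrt (hlampos k).le]
      ring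
    simp only [this]
    rw [← Finset.mul_sum, hq_orth, if_pos rfl, mul_one]
  -- reindex the partial sum
  have hreindex : ∑ k : Fin N, lam (Fin.castLE hN k)
      = ∑ k ∈ Finset.univ.filter (fun k : Fin Ns => (k : ℕ) < N), lam k := by
    rw [pod_aux_filter_eq Ns N hN, Finset.sum_map]
    rfl
  -- split the full sum
  have hsplit : ∑ k, lam k
      = (∑ k ∈ Finset.univ.filter (fun k : Fin Ns => (k : ℕ) < N), lam k)
      + ∑ k ∈ Finset.univ.filter (fun k : Fin Ns => N ≤ (k : ℕ)), lam k := by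
    rw [← Finset.sum_filter_add_sum_filter_not Finset.univ
      (fun k : Fin Ns => (k : ℕ) < N) lam]
    congr 1
    apply Finset.sum_congr _ fun _ _ => rfl
    apply Finset.filter_congr
    intro k _
    simp [not_lt]
  calc ∑ i, ‖Φ i - ∑ k, ⟪Φ i, ζ k⟫ • ζ k‖ ^ 2
      = ∑ i, (‖Φ i‖ ^ 2 - ∑ k : Fin N, ⟪Φ i, ζ k⟫ ^ 2) :=
        Finset.sum_congr rfl fun i _ => herr i
    _ = (∑ i, ‖Φ i‖ ^ 2) - ∑ i, ∑ k : Fin N, ⟪Φ i, ζ k⟫ ^ 2 := Finset.sum_sub_distrib _ _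
    _ = (∑ k, lam k) - ∑ k : Fin N, lam (Fin.castLE hN k) := by rw [htrace, hpart]
    _ = ∑ k ∈ Finset.univ.filter (fun k : Fin Ns => N ≤ (k : ℕ)), lam k := by
        rw [hreindex, hsplit]; ring
end
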